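/- Let 0 < α < 2 and λ₁(v,m) = (α - √(4-2α+α²)) v/(2m^α), r₁(v,m) = ((2-α)v - √(4-2α+α²) v, -2m). Then for v > 0, m > 0: ∇λ₁(v,m) · r₁(v,m) = (2 + α² - √(α²-2α+4) - α√(α²-2α+4)) v m^{-α}, and this quantity is strictly negative. -/
import Mathlib


noncomputable def pdv (f : ℝ → ℝ → ℝ) (v m : ℝ) : ℝ := deriv (fun x => f x m) v

noncomputable def pdm (f : ℝ → ℝ → ℝ) (v m : ℝ) : ℝ := deriv (fun y => f v y) m

/-- for 0 < α < 2 and v, m > 0, with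
λ₁(v,m) = (α - √(4-2α+α²)) v/(2 m^α) and r₁ = ((2-α)v - √(4-2α+α²) v, -2m),
∇λ₁ · r₁ = (2 + α² - √(α²-2α+4) - α √(α²-2α+4)) v m^{-α} < 0. -/
theorem grad_lambda1_dot_r1 (α v m : ℝ) (hα0 : 0 < α) (hα2 : α < 2)
    (hv : 0 < v) (hm : 0 < m) :
    pdv (fun v m => (α - Real.sqrt (4 - 2 * α + α ^ 2)) * v / (2 * m ^ α)) v m
        * ((2 - α) * v - Real.sqrt (4 - 2 * α + α ^ 2) * v)
      + pdm (fun v m => (α - Real.sqrt (4 - 2 * α + α ^ 2)) * v / (2 * m ^ α)) v m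
        * (-2 * m)
      = (2 + α ^ 2 - Real.sqrt (α ^ 2 - 2 * α + 4)
          - α * Real.sqrt (α ^ 2 - 2 * α + 4)) * v * m ^ (-α) ∧
    (2 + α ^ 2 - Real.sqrt (α ^ 2 - 2 * α + 4)
        - α * Real.sqrt (α ^ 2 - 2 * α + 4)) * v * m ^ (-α) < 0 := by
  have hpos : (0:ℝ) < 4 - 2 * α + α ^ 2 := by nlinarith
  have hs2 : Real.sqrt (4 - 2 * α + α ^ 2) ^ 2 = 4 - 2 * α + α ^ 2 :=
    Real.sq_sqrt hpos.le
  have hsnn : 0 ≤ Real.sqrt (4 - 2 * α + α ^ 2) := Real.sqrt_nonneg _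
  have hrw : Real.sqrt (α ^ 2 - 2 * α + 4) = Real.sqrt (4 - 2 * α + α ^ 2) := by
    rw [show α ^ 2 - 2 * α + 4 = 4 - 2 * α + α ^ 2 by ring]
  have hM : (0:ℝ) < m ^ α := Real.rpow_pos_of_pos hm α
  have hMne : (2 : ℝ) * m ^ α ≠ 0 := by positivity
  have h1 : pdv (fun v m => (α - Real.sqrt (4 - 2 * α + α ^ 2)) * v / (2 * m ^ α)) v m
      = (α - Real.sqrt (4 - 2 * α + α ^ 2)) / (2 * m ^ α) := by
    unfold pdv
    have he : (fun x => (α - Real.sqrt (4 - 2 * α + α ^ 2)) * x / (2 * m ^ α))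
        = fun x => ((α - Real.sqrt (4 - 2 * α + α ^ 2)) / (2 * m ^ α)) * x := by
      funext x; ring
    rw [he, deriv_const_mul_field, deriv_id'']; ring
  have hD : HasDerivAt (fun y : ℝ => 2 * y ^ α) (2 * (α * m ^ (α - 1))) m :=
    (Real.hasDerivAt_rpow_const (Or.inl hm.ne')).const_mul 2
  have h2 : pdm (fun v m => (α - Real.sqrt (4 - 2 * α + α ^ 2)) * v / (2 * m ^ α)) v m
      = (0 * (2 * m ^ α) - (α - Real.sqrt (4 - 2 * α + α ^ 2)) * v
          * (2 * (α * m ^ (α - 1)))) / (2 * m ^ α) ^ 2 :=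
    ((hasDerivAt_const m ((α - Real.sqrt (4 - 2 * α + α ^ 2)) * v)).div hD hMne).deriv
  have hm1 : m ^ (α - 1) = m ^ α / m := by rw [Real.rpow_sub hm, Real.rpow_one]
  have hneg : m ^ (-α) = (m ^ α)⁻¹ := Real.rpow_neg hm.le α
  rw [hrw, h1, h2, hm1, hneg]
  generalize hq : Real.sqrt (4 - 2 * α + α ^ 2) = t at hs2 hsnn ⊢
  have hkey : 2 + α ^ 2 < (1 + α) * t := by
    have hsq : (2 + α ^ 2) ^ 2 < ((1 + α) * t) ^ 2 := by
      rw [mul_pow, hs2]; nlinarith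
    exact lt_of_pow_lt_pow_left₀ 2 (mul_nonneg (by linarith) hsnn) hsq
  constructor
  · field_simp
    ring_nf
    nlinarith [hs2, mul_pos (mul_pos hv hm) (pow_pos hM 3), sq_nonneg t]
  · have hvp : (0:ℝ) < v * (m ^ α)⁻¹ := by positivity
    nlinarith [mul_pos hvp (show (0:ℝ) < (1 + α) * t - (2 + α ^ 2) by linarith)]
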